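/- Let R be a commutative ring and alpha in R with alpha^2 = 0. For formal variables t_1,...,t_r and a sequence lambda_1 >= ... >= lambda_r of integers, and coefficients beta_{-m+1},...,beta_{m-1} in R, the following identity holds in the Laurent polynomial ring R[t_1^{±1},...,t_r^{±1}]: (prod_{i=1}^r t_i^{lambda_i}) * (prod_{1<=i<j<=r} (1 - t_i/t_j)) * (1 + alpha * sum_{l=-m+1}^{m-1} beta_l * sum_{1<=i<j<=r} t_i^{m+l} t_j^{m-l}) = Det[t_1^{lambda_1} ... t_r^{lambda_r}] + alpha * sum_{l=-m+1}^{m-1} beta_l * sum_{1<=a<b<=r} Det[t_1^{lambda_1} ... t_a^{lambda_a+m+l} ... t_b^{lambda_b+m-l} ... t_r^{lambda_r}], where Det[t_1^{s_1}...t_r^{s_r}] := det( t_i^{s_i + j - i} )_{1<=i,j<=r}. -/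
import Mathlib


/-- The multivariate Laurent polynomial ring in `r` variables over `R`. -/
abbrev Laurent (R : Type*) [CommRing R] (r : ℕ) : Type _ :=
  AddMonoidAlgebra R (Fin r →₀ ℤ)

/-- The Laurent monomial `t i ^ k`. -/
noncomputable def Lmono {R : Type*} [CommRing R] {r : ℕ} (i : Fin r) (k : ℤ) :
    Laurent R r :=
  AddMonoidAlgebra.single (Finsupp.single i k) 1

/-- The constant `a`. -/
noncomputable def LC {R : Type*} [CommRing R] {r : ℕ} (a : R) : Laurent R r :=
  AddMonoidAlgebra.single (0 : Fin r →₀ ℤ) a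

/-- The multi-Schur determinant `Det[t_1^{s_1} ⋯ t_r^{s_r}] = det(t_i^{s_i + j - i})`. -/
noncomputable def laurentDet {R : Type*} [CommRing R] {r : ℕ} (s : Fin r → ℤ) :
    Laurent R r :=
  Matrix.det (Matrix.of fun i j : Fin r => (Lmono i (s i + (j : ℕ) - (i : ℕ)) : Laurent R r))

section
variable {R : Type*} [CommRing R] {r : ℕ}

lemma Lmono_mul (i : Fin r) (a b : ℤ) :
    (Lmono i a : Laurent R r) * Lmono i b = Lmono i (a + b) := by
  simp [Lmono, AddMonoidAlgebra.single_mul_single, Finsupp.single_add]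

lemma Lmono_zero (i : Fin r) : (Lmono i 0 : Laurent R r) = 1 := by
  rw [Lmono, Finsupp.single_zero]; rfl

lemma Lmono_pow (i : Fin r) (n : ℕ) : (Lmono i 1 : Laurent R r) ^ n = Lmono i n := by
  induction n with
  | zero => simpa using (Lmono_zero i).symm
  | succ k ih => rw [pow_succ, ih, Lmono_mul]; push_cast; ring_nf

lemma prod_pairs {M : Type*} [CommMonoid M] (f : Fin r → Fin r → M) :
    ∏ pq ∈ Finset.univ.filter (fun pq : Fin r × Fin r => pq.1 < pq.2), f pq.1 pq.2
      = ∏ i, ∏ j ∈ Finset.Ioi i, f i j :=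
  Finset.prod_finset_product' _ _ _ (by simp [Finset.mem_Ioi])

/-- The Vandermonde step: `∏_{i<j} (1 - t_i/t_j) = det(t_i^{j-i})`. -/
lemma vprod :
    (∏ pq ∈ Finset.univ.filter (fun pq : Fin r × Fin r => pq.1 < pq.2),
        (1 - Lmono pq.1 1 * Lmono pq.2 (-1)) : Laurent R r)
      = laurentDet (0 : Fin r → ℤ) := by
  have hM : (Matrix.of fun i j : Fin r =>
      (Lmono i ((0 : Fin r → ℤ) i + (j : ℕ) - (i : ℕ)) : Laurent R r))
      = Matrix.diagonal (fun i : Fin r => (Lmono i (-(i : ℤ)) : Laurent R r)) *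
        Matrix.vandermonde (fun i : Fin r => (Lmono i 1 : Laurent R r)) := by
    ext i j
    rw [Matrix.diagonal_mul, Matrix.vandermonde_apply, Lmono_pow, Lmono_mul]
    simp only [Matrix.of_apply, Pi.zero_apply]
    ring_nf
  rw [laurentDet, hM, Matrix.det_mul, Matrix.det_diagonal, Matrix.det_vandermonde]
  have hfac : ∀ i j : Fin r,
      (Lmono j 1 : Laurent R r) - Lmono i 1
        = (1 - Lmono i 1 * Lmono j (-1)) * Lmono j 1 := by
    intro i j
    rw [sub_mul, one_mul, mul_assoc, Lmono_mul]
    norm_num [Lmono_zero]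
  simp only [hfac]
  rw [Finset.prod_congr rfl (fun i _ => Finset.prod_mul_distrib),
    Finset.prod_mul_distrib,
    prod_pairs (f := fun i j => (1 : Laurent R r) - Lmono i 1 * Lmono j (-1))]
  have hswap : (∏ i : Fin r, ∏ j ∈ Finset.Ioi i, (Lmono j 1 : Laurent R r))
      = ∏ j : Fin r, Lmono j (j : ℤ) := by
    rw [Finset.prod_comm' (t' := Finset.univ) (s' := fun j => Finset.Iio j)
      (by simp [Finset.mem_Ioi, Finset.mem_Iio])]
    refine Finset.prod_congr rfl fun j _ => ?_
    rw [Finset.prod_const, Lmono_pow, Fin.card_Iio]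
  rw [hswap, ← mul_assoc, mul_comm (∏ i : Fin r, (Lmono i (-(i:ℤ)) : Laurent R r)),
    mul_assoc, ← Finset.prod_mul_distrib]
  simp [Lmono_mul, Lmono_zero]

/-- Key identity: `(∏ t_i^{s_i}) · ∏_{i<j}(1 - t_i/t_j) = Det s`. -/
lemma keyId (s : Fin r → ℤ) :
    (∏ i : Fin r, (Lmono i (s i) : Laurent R r)) *
      (∏ pq ∈ Finset.univ.filter (fun pq : Fin r × Fin r => pq.1 < pq.2),
        (1 - Lmono pq.1 1 * Lmono pq.2 (-1)))
      = laurentDet s := by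
  have hM : (Matrix.of fun i j : Fin r => (Lmono i (s i + (j : ℕ) - (i : ℕ)) : Laurent R r))
      = Matrix.diagonal (fun i : Fin r => (Lmono i (s i) : Laurent R r)) *
        Matrix.of (fun i j : Fin r =>
          (Lmono i ((0 : Fin r → ℤ) i + (j : ℕ) - (i : ℕ)) : Laurent R r)) := by
    ext i j
    rw [Matrix.diagonal_mul, Matrix.of_apply, Matrix.of_apply, Lmono_mul]
    simp only [Pi.zero_apply, zero_add]
    ring_nf
  rw [vprod, laurentDet, laurentDet, hM, Matrix.det_mul, Matrix.det_diagonal]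

lemma prod_ite_mono (a : Fin r) (x : ℤ) :
    (∏ i : Fin r, (Lmono i (if i = a then x else 0) : Laurent R r)) = Lmono a x := by
  rw [Finset.prod_eq_single a]
  · simp
  · intro i _ hi; rw [if_neg hi, Lmono_zero]
  · intro h; exact absurd (Finset.mem_univ a) h

lemma prod_shift (lam : Fin r → ℤ) (a b : Fin r) (_hab : a ≠ b) (x y : ℤ) :
    (∏ i : Fin r, (Lmono i (lam i) : Laurent R r)) * (Lmono a x * Lmono b y)
    = ∏ i : Fin r, Lmono i (lam i + (if i = a then x else 0) + (if i = b then y else 0)) := by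
  have h : ∀ i : Fin r, (Lmono i (lam i + (if i = a then x else 0) + (if i = b then y else 0))
      : Laurent R r)
      = Lmono i (lam i) * Lmono i (if i = a then x else 0) * Lmono i (if i = b then y else 0) := by
    intro i; rw [Lmono_mul, Lmono_mul]
  simp only [h]
  rw [Finset.prod_mul_distrib, Finset.prod_mul_distrib, prod_ite_mono, prod_ite_mono, mul_assoc]

end

theorem stmt_12 {R : Type*} [CommRing R] (α : R) (hα : α ^ 2 = 0)
    (m : ℕ) (hm : 1 ≤ m) (r : ℕ) (lam : Fin r → ℤ) (hlam : Antitone lam)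
    (β : ℤ → R) :
    (∏ i : Fin r, (Lmono i (lam i) : Laurent R r)) *
      (∏ pq ∈ Finset.univ.filter (fun pq : Fin r × Fin r => pq.1 < pq.2),
        (1 - Lmono pq.1 1 * Lmono pq.2 (-1))) *
      (1 + LC α * ∑ l ∈ Finset.Icc (-(m : ℤ) + 1) ((m : ℤ) - 1),
        LC (β l) * ∑ pq ∈ Finset.univ.filter (fun pq : Fin r × Fin r => pq.1 < pq.2),
          Lmono pq.1 ((m : ℤ) + l) * Lmono pq.2 ((m : ℤ) - l))
    = laurentDet lam
      + LC α * ∑ l ∈ Finset.Icc (-(m : ℤ) + 1) ((m : ℤ) - 1),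
          LC (β l) *
            ∑ pq ∈ Finset.univ.filter (fun pq : Fin r × Fin r => pq.1 < pq.2),
              laurentDet (fun i => lam i
                + (if i = pq.1 then (m : ℤ) + l else 0)
                + (if i = pq.2 then (m : ℤ) - l else 0)) := by
  set P := (∏ i : Fin r, (Lmono i (lam i) : Laurent R r)) with hP
  set V := (∏ pq ∈ Finset.univ.filter (fun pq : Fin r × Fin r => pq.1 < pq.2),
        (1 - Lmono pq.1 1 * Lmono pq.2 (-1)) : Laurent R r) with hV
  rw [mul_add, mul_one]
  congr 1
  · exact keyId lam
  rw [mul_left_comm, Finset.mul_sum]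
  congr 1
  refine Finset.sum_congr rfl fun l _ => ?_
  rw [mul_left_comm, Finset.mul_sum]
  congr 1
  refine Finset.sum_congr rfl fun pq hpq => ?_
  have hab : pq.1 ≠ pq.2 := ne_of_lt (Finset.mem_filter.mp hpq).2
  rw [mul_comm (P * V), ← mul_assoc, mul_comm _ P, mul_assoc P, mul_comm _ V, ← mul_assoc,
    mul_comm P, mul_assoc V, prod_shift lam pq.1 pq.2 hab, mul_comm V, keyId]
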